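/- Let f be a tiling of ℤ² by the 11-tile Wang set 𝒯 = 𝒯₀ ∪ 𝒯₁. Then every row of f uses tiles of only one of 𝒯₀, 𝒯₁; define v : ℤ → {0,1} by v(y) = 1 if row y uses tiles of 𝒯₁ and v(y) = 0 otherwise. Then there exists a strictly increasing sequence (p_k)_{k∈ℤ} of integers with p_k → ±∞ (as k → ±∞) such that for every k, p_{k+1} − p_k ∈ {4,5}, v(p_k) = 1 and v(y) = 0 for all y with p_k < y < p_{k+1}; that is, v is a biinfinite concatenation of the blocks 1000 and 10000. -/

import Mathlib

structure WangTile (H V : Type*) where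
  west : H
  east : H
  south : V
  north : V
deriving DecidableEq

def TilingOn {H V : Type*} (T : Set (WangTile H V)) (X : Set (ℤ × ℤ))
    (f : ℤ × ℤ → WangTile H V) : Prop :=
  (∀ p ∈ X, f p ∈ T) ∧
  (∀ x y : ℤ, (x, y) ∈ X → (x + 1, y) ∈ X →
    (f (x, y)).east = (f (x + 1, y)).west) ∧
  (∀ x y : ℤ, (x, y) ∈ X → (x, y + 1) ∈ X →
    (f (x, y)).north = (f (x, y + 1)).south)

def Tiling {H V : Type*} (T : Set (WangTile H V)) (f : ℤ × ℤ → WangTile H V) : Prop :=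
  TilingOn T Set.univ f

def TilesPlane {H V : Type*} (T : Set (WangTile H V)) : Prop :=
  ∃ f, Tiling T f

def PeriodicTiling {H V : Type*} (f : ℤ × ℤ → WangTile H V) : Prop :=
  ∃ u v : ℤ, (u, v) ≠ (0, 0) ∧ ∀ x y : ℤ, f (x + u, y + v) = f (x, y)

def Aperiodic {H V : Type*} (T : Set (WangTile H V)) : Prop :=
  TilesPlane T ∧ ∀ f, Tiling T f → ¬ PeriodicTiling f

def MinimallyAperiodic {H V : Type*} (T : Set (WangTile H V)) : Prop :=
  Aperiodic T ∧ ∀ S : Set (WangTile H V), S ⊂ T → ¬ TilesPlane S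

/-- The nine tiles `𝒯₀` of the 11-tile Wang set `𝒯`.  Horizontal (west/east) colors in
`Fin 4`, vertical (south/north) colors in `Fin 5`.  Tiles are written
`⟨west, east, south, north⟩`. -/
def T₀ : Set (WangTile (Fin 4) (Fin 5)) :=
  { ⟨0, 0, 1, 0⟩, ⟨0, 3, 2, 1⟩, ⟨1, 0, 2, 2⟩, ⟨1, 1, 4, 2⟩, ⟨1, 3, 2, 3⟩,
    ⟨3, 0, 1, 1⟩, ⟨3, 1, 1, 1⟩, ⟨3, 1, 2, 2⟩, ⟨3, 3, 3, 1⟩ }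

/-- The two tiles `𝒯₁` of the 11-tile Wang set `𝒯`. -/
def T₁ : Set (WangTile (Fin 4) (Fin 5)) := { ⟨2, 2, 1, 4⟩, ⟨2, 2, 0, 2⟩ }

/-- The 11-tile Wang set `𝒯 = 𝒯₀ ∪ 𝒯₁`. -/
def T11 : Set (WangTile (Fin 4) (Fin 5)) := T₀ ∪ T₁

/-- The horizontal strip `ℤ × {0, …, m}`. -/
def strip (m : ℕ) : Set (ℤ × ℤ) := {p : ℤ × ℤ | 0 ≤ p.2 ∧ p.2 ≤ (m : ℤ)}

/-!
Each row of a tiling is uniform because the horizontal color `2` occurs exactly on the tiles of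
`𝒯₁`. The gaps between consecutive `𝒯₁`-rows are then controlled by looking at a band of rows of
prescribed kinds: stacking the tiles of a band column by column turns it into a biinfinite walk in
the finite graph of vertically matching columns, whose edges are the horizontal matchings. For the
bands `11`, `101`, `1001` and `00000` the relevant graph (on the inner rows) is acyclic, so no such
band exists. Hence consecutive `𝒯₁`-rows are `4` or `5` apart, and enumerating them in increasing
order gives the sequence `p`.
-/

open Filter

theorem List.Forall₂.dropLast {α β : Type*} {R : α → β → Prop} :
    ∀ {l₁ : List α} {l₂ : List β}, Forall₂ R l₁ l₂ → Forall₂ R l₁.dropLast l₂.dropLast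
  | _, _, .nil => .nil
  | _, _, .cons _ .nil => .nil
  | _, _, .cons h (.cons h' t) => .cons h (Forall₂.dropLast (.cons h' t))

theorem Set.exists_strictMono_int_range_eq {S : Set ℤ} (hS : ¬BddAbove S) (hS' : ¬BddBelow S) :
    ∃ p : ℤ → ℤ, StrictMono p ∧ Set.range p = S := by
  classical
  obtain ⟨a, ha, -⟩ := not_bddAbove_iff.mp hS 0
  have : Nonempty S := ⟨⟨a, ha⟩⟩
  have : NoMaxOrder S := ⟨fun ⟨a, _⟩ ↦
    let ⟨b, hb, hab⟩ := not_bddAbove_iff.mp hS a; ⟨⟨b, hb⟩, hab⟩⟩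
  have : NoMinOrder S := ⟨fun ⟨a, _⟩ ↦
    let ⟨b, hb, hab⟩ := not_bddBelow_iff.mp hS' a; ⟨⟨b, hb⟩, hab⟩⟩
  let _ : SuccOrder S := LinearLocallyFiniteOrder.succOrder S
  let _ : PredOrder S := LinearLocallyFiniteOrder.predOrder S
  let e : ℤ ≃o S := orderIsoIntOfLinearSuccPredArch.symm
  refine ⟨Subtype.val ∘ e, (Subtype.strictMono_coe _).comp e.strictMono, ?_⟩
  rw [Set.range_comp, e.surjective.range_eq, Set.image_univ, Subtype.range_coe]

theorem Set.exists_strictMono_int_enumeration_of_gaps {S : Set ℤ} {m n : ℤ}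
    (hsep : ∀ a ∈ S, ∀ b ∈ S, a < b → a + m ≤ b) (hcover : ∀ y, ∃ z ∈ S, y < z ∧ z ≤ y + n) :
    ∃ p : ℤ → ℤ, StrictMono p ∧ Tendsto p atTop atTop ∧ Tendsto p atBot atBot ∧
      ∀ k, (m ≤ p (k + 1) - p k ∧ p (k + 1) - p k ≤ n) ∧ p k ∈ S ∧
        ∀ y, p k < y → y < p (k + 1) → y ∉ S := by
  have hS : ¬BddAbove S := not_bddAbove_iff.mpr fun y ↦
    let ⟨z, hz, hyz, _⟩ := hcover y; ⟨z, hz, hyz⟩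
  have hS' : ¬BddBelow S := not_bddBelow_iff.mpr fun y ↦
    let ⟨z, hz, _, hzy⟩ := hcover (y - n - 1); ⟨z, hz, by linarith⟩
  obtain ⟨p, hp, rfl⟩ := exists_strictMono_int_range_eq hS hS'
  have hbetween : ∀ k y, p k < y → y < p (k + 1) → y ∉ Set.range p := by
    rintro k y hk hk' ⟨j, rfl⟩
    have := hp.lt_iff_lt.mp hk
    have := hp.lt_iff_lt.mp hk'
    omega
  refine ⟨p, hp, tendsto_atTop_atTop_of_monotone hp.monotone fun b ↦ ?_,
    tendsto_atBot_atBot_of_monotone hp.monotone fun b ↦ ?_,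
    fun k ↦ ⟨⟨?_, ?_⟩, ⟨k, rfl⟩, hbetween k⟩⟩
  · obtain ⟨-, ⟨a, rfl⟩, hb, -⟩ := hcover b
    exact ⟨a, hb.le⟩
  · obtain ⟨-, ⟨a, rfl⟩, -, hb⟩ := hcover (b - n)
    exact ⟨a, by linarith⟩
  · linarith [hsep _ ⟨k, rfl⟩ _ ⟨k + 1, rfl⟩ (hp (lt_add_one k))]
  · obtain ⟨z, hz, hkz, hzn⟩ := hcover (p k)
    have : p (k + 1) ≤ z := not_lt.mp fun h ↦ hbetween k z hkz h hz
    linarith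

namespace WangTile

variable {H V : Type*}

def column (f : ℤ × ℤ → WangTile H V) : ℕ → ℤ → ℤ → List (WangTile H V)
  | 0, _, _ => []
  | k + 1, x, y => f (x, y) :: column f k x (y + 1)

def admissibleColumns [DecidableEq V] : List (List (WangTile H V)) → List (List (WangTile H V))
  | [] => [[]]
  | A :: rows => A.flatMap fun t =>
      ((admissibleColumns rows).filter fun s ↦ s.head?.all fun u ↦ t.north = u.south).map (t :: ·)

def RowsIn (f : ℤ × ℤ → WangTile H V) : List (List (WangTile H V)) → ℤ → Prop
  | [], _ => True
  | A :: rows, y => (∀ x, f (x, y) ∈ A) ∧ RowsIn f rows (y + 1)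

end WangTile

namespace Tiling

open WangTile

variable {H V : Type*} {T : Set (WangTile H V)} {f : ℤ × ℤ → WangTile H V}

theorem mem (hf : Tiling T f) (p : ℤ × ℤ) : f p ∈ T :=
  hf.1 p (Set.mem_univ _)

theorem east_eq_west (hf : Tiling T f) (x y : ℤ) : (f (x, y)).east = (f (x + 1, y)).west :=
  hf.2.1 x y (Set.mem_univ _) (Set.mem_univ _)

theorem north_eq_south (hf : Tiling T f) (x y : ℤ) : (f (x, y)).north = (f (x, y + 1)).south :=
  hf.2.2 x y (Set.mem_univ _) (Set.mem_univ _)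

theorem column_mem_admissibleColumns [DecidableEq V] (hf : Tiling T f)
    {rows : List (List (WangTile H V))} {y : ℤ} (h : RowsIn f rows y) (x : ℤ) :
    column f rows.length x y ∈ admissibleColumns rows := by
  induction rows generalizing y with
  | nil => simp [column, admissibleColumns]
  | cons A rows ih =>
    simp only [List.length_cons, column, admissibleColumns, List.mem_flatMap, List.mem_map,
      List.mem_filter, List.cons.injEq]
    refine ⟨f (x, y), h.1 x, _, ⟨ih h.2, ?_⟩, rfl, rfl⟩
    cases rows.length <;> simp [column, hf.north_eq_south]

theorem forall₂_column (hf : Tiling T f) (k : ℕ) (x y : ℤ) :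
    List.Forall₂ (fun a b ↦ a.east = b.west) (column f k x y) (column f k (x + 1) y) := by
  induction k generalizing y with
  | zero => exact .nil
  | succ k ih => exact .cons (hf.east_eq_west x y) (ih _)

/-- The inner parts of the columns of a band form an eastward walk in `S` along which `S.idxOf`
strictly decreases. -/
theorem not_rowsIn [DecidableEq H] [DecidableEq V] (hf : Tiling T f)
    {rows S : List (List (WangTile H V))} (hS : ∀ s ∈ admissibleColumns rows, s.tail.dropLast ∈ S)
    (hsorted : ∀ s ∈ S, ∀ t ∈ S,
      List.Forall₂ (fun a b ↦ a.east = b.west) s t → S.idxOf t < S.idxOf s)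
    (y : ℤ) : ¬RowsIn f rows y := by
  intro h
  let inner : ℕ → List (WangTile H V) := fun n ↦ (column f rows.length n y).tail.dropLast
  have hinner : ∀ n, inner n ∈ S := fun n ↦ hS _ (hf.column_mem_admissibleColumns h n)
  obtain ⟨n, hn⟩ := WellFounded.not_rel_apply_succ (r := (· < ·)) fun n ↦ S.idxOf (inner n)
  refine hn (hsorted _ (hinner n) _ (hinner (n + 1)) ?_)
  have := List.forall₂_drop 1 (hf.forall₂_column rows.length n y)
  simpa only [inner, List.drop_one, Nat.cast_succ] using this.dropLast

end Tiling

def T₀list : List (WangTile (Fin 4) (Fin 5)) :=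
  [⟨0, 0, 1, 0⟩, ⟨0, 3, 2, 1⟩, ⟨1, 0, 2, 2⟩, ⟨1, 1, 4, 2⟩, ⟨1, 3, 2, 3⟩,
    ⟨3, 0, 1, 1⟩, ⟨3, 1, 1, 1⟩, ⟨3, 1, 2, 2⟩, ⟨3, 3, 3, 1⟩]

def T₁list : List (WangTile (Fin 4) (Fin 5)) := [⟨2, 2, 1, 4⟩, ⟨2, 2, 0, 2⟩]

theorem mem_T₀_iff {t : WangTile (Fin 4) (Fin 5)} : t ∈ T₀ ↔ t ∈ T₀list := by
  simp [T₀, T₀list]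

theorem mem_T₁_iff {t : WangTile (Fin 4) (Fin 5)} : t ∈ T₁ ↔ t ∈ T₁list := by
  simp [T₁, T₁list]

theorem mem_T₁_iff_west_eq_two {t : WangTile (Fin 4) (Fin 5)} (ht : t ∈ T11) :
    t ∈ T₁ ↔ t.west = 2 := by
  have key : ∀ t ∈ T₀list ++ T₁list, t ∈ T₁list ↔ t.west = 2 := by decide
  rw [mem_T₁_iff]
  exact key t (by simpa [T11, mem_T₀_iff, mem_T₁_iff] using ht)

theorem mem_T₁_iff_east_eq_two {t : WangTile (Fin 4) (Fin 5)} (ht : t ∈ T11) :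
    t ∈ T₁ ↔ t.east = 2 := by
  have key : ∀ t ∈ T₀list ++ T₁list, t ∈ T₁list ↔ t.east = 2 := by decide
  rw [mem_T₁_iff]
  exact key t (by simpa [T11, mem_T₀_iff, mem_T₁_iff] using ht)

def rowsOfT₁ (f : ℤ × ℤ → WangTile (Fin 4) (Fin 5)) : Set ℤ := {y | ∃ x, f (x, y) ∈ T₁}

def rowTiles : Bool → List (WangTile (Fin 4) (Fin 5))
  | true => T₁list
  | false => T₀list

/-! The inner parts (all but the bottom and top tile) of the admissible columns of the bands `101`,
`1001` and `00000`, where `1` is a row of `𝒯₁` and `0` a row of `𝒯₀`, listed so that a column only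
matches, on its east side, columns listed before it. -/

def innerColumns101 : List (List (WangTile (Fin 4) (Fin 5))) := [[⟨0, 3, 2, 1⟩]]

def innerColumns1001 : List (List (WangTile (Fin 4) (Fin 5))) :=
  [[⟨0, 3, 2, 1⟩, ⟨3, 1, 1, 1⟩], [⟨1, 3, 2, 3⟩, ⟨3, 3, 3, 1⟩], [⟨1, 1, 4, 2⟩, ⟨0, 3, 2, 1⟩],
    [⟨3, 1, 2, 2⟩, ⟨0, 3, 2, 1⟩], [⟨0, 3, 2, 1⟩, ⟨0, 0, 1, 0⟩], [⟨0, 3, 2, 1⟩, ⟨3, 0, 1, 1⟩],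
    [⟨1, 0, 2, 2⟩, ⟨0, 3, 2, 1⟩]]

def innerColumns00000 : List (List (WangTile (Fin 4) (Fin 5))) :=
  [[⟨3, 0, 1, 1⟩, ⟨3, 0, 1, 1⟩, ⟨3, 0, 1, 1⟩], [⟨3, 0, 1, 1⟩, ⟨3, 0, 1, 1⟩, ⟨3, 1, 1, 1⟩],
    [⟨3, 0, 1, 1⟩, ⟨3, 1, 1, 1⟩, ⟨3, 0, 1, 1⟩], [⟨3, 0, 1, 1⟩, ⟨3, 1, 1, 1⟩, ⟨3, 1, 1, 1⟩],
    [⟨3, 1, 1, 1⟩, ⟨3, 0, 1, 1⟩, ⟨3, 0, 1, 1⟩], [⟨3, 1, 1, 1⟩, ⟨3, 0, 1, 1⟩, ⟨3, 1, 1, 1⟩],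
    [⟨0, 3, 2, 1⟩, ⟨3, 0, 1, 1⟩, ⟨3, 0, 1, 1⟩], [⟨0, 3, 2, 1⟩, ⟨3, 0, 1, 1⟩, ⟨3, 1, 1, 1⟩],
    [⟨1, 0, 2, 2⟩, ⟨0, 3, 2, 1⟩, ⟨3, 0, 1, 1⟩], [⟨1, 0, 2, 2⟩, ⟨0, 3, 2, 1⟩, ⟨3, 1, 1, 1⟩],
    [⟨1, 0, 2, 2⟩, ⟨1, 0, 2, 2⟩, ⟨0, 3, 2, 1⟩], [⟨1, 0, 2, 2⟩, ⟨1, 0, 2, 2⟩, ⟨1, 0, 2, 2⟩],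
    [⟨1, 0, 2, 2⟩, ⟨1, 0, 2, 2⟩, ⟨1, 3, 2, 3⟩], [⟨1, 0, 2, 2⟩, ⟨1, 0, 2, 2⟩, ⟨3, 1, 2, 2⟩],
    [⟨1, 0, 2, 2⟩, ⟨3, 1, 2, 2⟩, ⟨0, 3, 2, 1⟩], [⟨1, 0, 2, 2⟩, ⟨3, 1, 2, 2⟩, ⟨1, 0, 2, 2⟩],
    [⟨1, 0, 2, 2⟩, ⟨3, 1, 2, 2⟩, ⟨1, 3, 2, 3⟩], [⟨1, 0, 2, 2⟩, ⟨3, 1, 2, 2⟩, ⟨3, 1, 2, 2⟩],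
    [⟨3, 1, 2, 2⟩, ⟨1, 0, 2, 2⟩, ⟨1, 0, 2, 2⟩], [⟨3, 1, 2, 2⟩, ⟨1, 0, 2, 2⟩, ⟨3, 1, 2, 2⟩],
    [⟨3, 3, 3, 1⟩, ⟨3, 0, 1, 1⟩, ⟨3, 0, 1, 1⟩], [⟨3, 3, 3, 1⟩, ⟨3, 0, 1, 1⟩, ⟨3, 1, 1, 1⟩],
    [⟨3, 1, 1, 1⟩, ⟨3, 1, 1, 1⟩, ⟨3, 0, 1, 1⟩], [⟨3, 1, 1, 1⟩, ⟨3, 1, 1, 1⟩, ⟨3, 1, 1, 1⟩],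
    [⟨3, 1, 2, 2⟩, ⟨0, 3, 2, 1⟩, ⟨3, 0, 1, 1⟩], [⟨3, 1, 2, 2⟩, ⟨0, 3, 2, 1⟩, ⟨3, 1, 1, 1⟩],
    [⟨3, 1, 2, 2⟩, ⟨1, 0, 2, 2⟩, ⟨0, 3, 2, 1⟩], [⟨3, 1, 2, 2⟩, ⟨1, 0, 2, 2⟩, ⟨1, 3, 2, 3⟩],
    [⟨3, 1, 2, 2⟩, ⟨3, 1, 2, 2⟩, ⟨1, 0, 2, 2⟩], [⟨3, 1, 2, 2⟩, ⟨3, 1, 2, 2⟩, ⟨3, 1, 2, 2⟩],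
    [⟨0, 3, 2, 1⟩, ⟨3, 1, 1, 1⟩, ⟨3, 0, 1, 1⟩], [⟨0, 3, 2, 1⟩, ⟨3, 1, 1, 1⟩, ⟨3, 1, 1, 1⟩],
    [⟨3, 3, 3, 1⟩, ⟨3, 1, 1, 1⟩, ⟨3, 0, 1, 1⟩], [⟨3, 3, 3, 1⟩, ⟨3, 1, 1, 1⟩, ⟨3, 1, 1, 1⟩],
    [⟨1, 0, 2, 2⟩, ⟨1, 3, 2, 3⟩, ⟨3, 3, 3, 1⟩], [⟨3, 1, 2, 2⟩, ⟨3, 1, 2, 2⟩, ⟨0, 3, 2, 1⟩],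
    [⟨3, 1, 2, 2⟩, ⟨3, 1, 2, 2⟩, ⟨1, 3, 2, 3⟩], [⟨1, 3, 2, 3⟩, ⟨3, 3, 3, 1⟩, ⟨3, 0, 1, 1⟩],
    [⟨1, 3, 2, 3⟩, ⟨3, 3, 3, 1⟩, ⟨3, 1, 1, 1⟩], [⟨3, 1, 2, 2⟩, ⟨1, 3, 2, 3⟩, ⟨3, 3, 3, 1⟩]]

namespace Tiling

open WangTile

variable {f : ℤ × ℤ → WangTile (Fin 4) (Fin 5)}

theorem mem_T₁_iff_mem_T₁_of_row (hf : Tiling T11 f) (x x' y : ℤ) :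
    f (x, y) ∈ T₁ ↔ f (x', y) ∈ T₁ := by
  have hper : Function.Periodic (fun x ↦ f (x, y) ∈ T₁) 1 := fun x ↦ propext <| by
    show f (x + 1, y) ∈ T₁ ↔ f (x, y) ∈ T₁
    rw [mem_T₁_iff_west_eq_two (hf.mem _), ← hf.east_eq_west,
      ← mem_T₁_iff_east_eq_two (hf.mem _)]
  simpa using (hper.int_mul (x' - x) x).symm

theorem forall_mem_T₀_or_forall_mem_T₁ (hf : Tiling T11 f) (y : ℤ) :
    (∀ x, f (x, y) ∈ T₀) ∨ ∀ x, f (x, y) ∈ T₁ := by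
  by_cases h : y ∈ rowsOfT₁ f
  · obtain ⟨x₀, hx₀⟩ := h
    exact .inr fun x ↦ (hf.mem_T₁_iff_mem_T₁_of_row x₀ x y).mp hx₀
  · exact .inl fun x ↦ (hf.mem (x, y)).resolve_right fun hx ↦ h ⟨x, hx⟩

theorem mem_rowTiles (hf : Tiling T11 f) {y : ℤ} {b : Bool} (h : y ∈ rowsOfT₁ f ↔ b = true)
    (x : ℤ) : f (x, y) ∈ rowTiles b := by
  cases b with
  | true =>
    obtain ⟨x₀, hx₀⟩ := h.mpr rfl
    exact mem_T₁_iff.mp <| (hf.mem_T₁_iff_mem_T₁_of_row x₀ x y).mp hx₀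
  | false =>
    exact mem_T₀_iff.mp <| (hf.mem (x, y)).resolve_right fun hx ↦ by simpa using h.mp ⟨x, hx⟩

theorem rowsIn_map_rowTiles (hf : Tiling T11 f) {w : List Bool} {y : ℤ}
    (hw : ∀ i (hi : i < w.length), y + i ∈ rowsOfT₁ f ↔ w[i] = true) :
    RowsIn f (w.map rowTiles) y := by
  induction w generalizing y with
  | nil => trivial
  | cons b w ih =>
    have h₀ := hw 0 (by simp)
    refine ⟨hf.mem_rowTiles ?_, ih fun i hi ↦ ?_⟩
    · simpa only [List.getElem_cons_zero, Nat.cast_zero, add_zero] using h₀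
    · have hi' := hw (i + 1) (by simpa using hi)
      simp only [List.getElem_cons_succ, Nat.cast_succ] at hi'
      rwa [add_assoc, add_comm 1]

theorem not_rowPattern (hf : Tiling T11 f) {w : List Bool}
    {S : List (List (WangTile (Fin 4) (Fin 5)))}
    (hS : ∀ s ∈ admissibleColumns (w.map rowTiles), s.tail.dropLast ∈ S)
    (hsorted : ∀ s ∈ S, ∀ t ∈ S,
      List.Forall₂ (fun a b ↦ a.east = b.west) s t → S.idxOf t < S.idxOf s) (y : ℤ) :
    ¬∀ i (hi : i < w.length), y + i ∈ rowsOfT₁ f ↔ w[i] = true :=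
  fun hw ↦ hf.not_rowsIn hS hsorted y (hf.rowsIn_map_rowTiles hw)

theorem add_one_notMem_rowsOfT₁ (hf : Tiling T11 f) {y : ℤ} (hy : y ∈ rowsOfT₁ f) :
    y + 1 ∉ rowsOfT₁ f := fun hy₁ ↦
  hf.not_rowPattern (w := [true, true]) (S := []) (by decide) (by decide) y fun i hi ↦ by
    simp only [List.length_cons, List.length_nil] at hi
    interval_cases i <;> simp [hy, hy₁]

theorem add_two_notMem_rowsOfT₁ (hf : Tiling T11 f) {y : ℤ} (hy : y ∈ rowsOfT₁ f) :
    y + 2 ∉ rowsOfT₁ f := fun hy₂ ↦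
  hf.not_rowPattern (w := [true, false, true]) (S := innerColumns101) (by decide) (by decide) y
    fun i hi ↦ by
      simp only [List.length_cons, List.length_nil] at hi
      interval_cases i <;> simp [hy, hy₂, hf.add_one_notMem_rowsOfT₁ hy]

theorem add_three_notMem_rowsOfT₁ (hf : Tiling T11 f) {y : ℤ} (hy : y ∈ rowsOfT₁ f) :
    y + 3 ∉ rowsOfT₁ f := fun hy₃ ↦
  hf.not_rowPattern (w := [true, false, false, true]) (S := innerColumns1001) (by decide)
    (by decide) y fun i hi ↦ by
      simp only [List.length_cons, List.length_nil] at hi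
      interval_cases i <;>
        simp [hy, hy₃, hf.add_one_notMem_rowsOfT₁ hy, hf.add_two_notMem_rowsOfT₁ hy]

theorem add_four_le_of_mem_rowsOfT₁ (hf : Tiling T11 f) {a b : ℤ} (ha : a ∈ rowsOfT₁ f)
    (hb : b ∈ rowsOfT₁ f) (hab : a < b) : a + 4 ≤ b := by
  by_contra! h
  obtain rfl | rfl | rfl : b = a + 1 ∨ b = a + 2 ∨ b = a + 3 := by omega
  exacts [hf.add_one_notMem_rowsOfT₁ ha hb, hf.add_two_notMem_rowsOfT₁ ha hb,
    hf.add_three_notMem_rowsOfT₁ ha hb]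

set_option maxRecDepth 2000 in
theorem exists_mem_rowsOfT₁_Ioc (hf : Tiling T11 f) (y : ℤ) :
    ∃ z ∈ rowsOfT₁ f, y < z ∧ z ≤ y + 5 := by
  by_contra! h
  refine hf.not_rowPattern (w := .replicate 5 false) (S := innerColumns00000)
    (by decide) (by decide) (y + 1) fun i hi ↦ ?_
  rw [List.length_replicate] at hi
  rw [List.getElem_replicate, Bool.false_eq_true, iff_false]
  exact fun hz ↦ (h (y + 1 + i) hz (by omega)).not_ge (by omega)

end Tiling

/-- in any tiling of the plane by the 11-tile set `𝒯 = 𝒯₀ ∪ 𝒯₁`, each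
row uses tiles of only one of `𝒯₀`, `𝒯₁`; and the row labelling `v : ℤ → {0,1}`
(`v y = 1` iff row `y` uses tiles of `𝒯₁`) is a biinfinite concatenation of the blocks
`1000` and `10000`: there is a strictly increasing sequence `(p k)` of integers tending
to `±∞` with consecutive gaps in `{4,5}`, `v (p k) = 1`, and `v = 0` strictly between
consecutive `p k`'s. -/
theorem T11_rows_structure (f : ℤ × ℤ → WangTile (Fin 4) (Fin 5))
    (hf : Tiling T11 f) :
    (∀ y : ℤ, (∀ x : ℤ, f (x, y) ∈ T₀) ∨ (∀ x : ℤ, f (x, y) ∈ T₁)) ∧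
    ∀ v : ℤ → Fin 2, (∀ y : ℤ, v y = 1 ↔ ∃ x : ℤ, f (x, y) ∈ T₁) →
      ∃ p : ℤ → ℤ, StrictMono p ∧
        Filter.Tendsto p Filter.atTop Filter.atTop ∧
        Filter.Tendsto p Filter.atBot Filter.atBot ∧
        ∀ k : ℤ, (p (k + 1) - p k = 4 ∨ p (k + 1) - p k = 5) ∧
          v (p k) = 1 ∧ ∀ y : ℤ, p k < y → y < p (k + 1) → v y = 0 := by
  refine ⟨hf.forall_mem_T₀_or_forall_mem_T₁, fun v hv ↦ ?_⟩
  have hv₀ : ∀ y, y ∉ rowsOfT₁ f → v y = 0 := fun y hy ↦ by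
    have fin_two : ∀ a : Fin 2, a ≠ 1 → a = 0 := by decide
    exact fin_two _ fun h ↦ hy ((hv y).mp h)
  obtain ⟨p, hp, hatTop, hatBot, hgaps⟩ :=
    Set.exists_strictMono_int_enumeration_of_gaps
      (fun _ ha _ hb ↦ hf.add_four_le_of_mem_rowsOfT₁ ha hb) hf.exists_mem_rowsOfT₁_Ioc
  refine ⟨p, hp, hatTop, hatBot, fun k ↦ ?_⟩
  obtain ⟨⟨hge, hle⟩, hk, hbetween⟩ := hgaps k
  exact ⟨by omega, (hv _).mpr hk, fun y h₁ h₂ ↦ hv₀ y (hbetween y h₁ h₂)⟩
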